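/- If a graph G has β cycles where β is an infinite cardinal, then every connected component of the forest graph F(G) has exactly β vertices, and F(G) has exactly 2^β connected components. -/

import Mathlib

/-! Maximal forests of `G` are exactly its spanning forests: acyclic subgraphs with the reachability
relation of `G`. An edge missing from a maximal forest `F` closes a cycle with it, so maximal
forests differ only on the set `E` of edges lying on cycles, and `F` contains all other edges of
`G`. A cycle is determined by its edges outside `F`: the symmetric difference of two cycles has
even degree everywhere, whereas a finite nonempty subgraph of `F` has a leaf. As cycles are finite,
`|E| = |E \ F| = β`.

A component of `F(G)` consists of forests differing from one of them, `F`, in finitely many edges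
of `E`, hence has at most `β` elements, and it has at least `β`, since each edge of `E \ F` can be
exchanged into `F`. A maximal forest is determined by its edges in `E`, so there are at most `2 ^ β`
of them; conversely a spanning forest `S` of `E \ F` has `β` edges, and every subset of `S`
extends, inside `F ∪ S`, to its own maximal forest. Summing over the components, `κ · β = 2 ^ β` for
their number `κ`, which forces `κ = 2 ^ β`. -/

open Cardinal

variable {V : Type*}

/-- `F` is a maximal forest of `G`: an acyclic subgraph of `G` maximal among
acyclic subgraphs of `G` under inclusion. -/
def IsMaximalForest (G F : SimpleGraph V) : Prop :=
  F ≤ G ∧ F.IsAcyclic ∧ ∀ F' : SimpleGraph V, F' ≤ G → F'.IsAcyclic → F ≤ F' → F' = F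

/-- The forest graph of `G`: vertices are the maximal forests of `G`,
two adjacent iff they differ by exactly one edge. -/
def forestGraph (G : SimpleGraph V) :
    SimpleGraph {F : SimpleGraph V // IsMaximalForest G F} where
  Adj F₁ F₂ := (F₁.1.edgeSet \ F₂.1.edgeSet).encard = 1 ∧
               (F₂.1.edgeSet \ F₁.1.edgeSet).encard = 1
  symm := ⟨fun F₁ F₂ h => ⟨h.2, h.1⟩⟩
  loopless := ⟨fun F h => by simp at h⟩

/-- The set of cycles of `G`, each cycle identified with its edge set. -/
def cycleSet (G : SimpleGraph V) : Set (Set (Sym2 V)) :=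
  {s | ∃ (v : V) (c : G.Walk v v), c.IsCycle ∧ s = {e | e ∈ c.edges}}

open SimpleGraph
open scoped symmDiff

theorem Finset.card_symmDiff_add_two_mul_card_inter {α : Type*} [DecidableEq α]
    (s t : Finset α) : (s ∆ t).card + 2 * (s ∩ t).card = s.card + t.card := by
  have hsub : s ∩ t ⊆ s ∪ t := Finset.inter_subset_left.trans Finset.subset_union_left
  rw [symmDiff_eq_sup_sdiff_inf, Finset.sup_eq_union, Finset.inf_eq_inter,
    Finset.card_sdiff_of_subset hsub, ← Finset.card_union_add_card_inter s t]
  have := Finset.card_le_card hsub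
  omega

section Cardinality

universe u

theorem Cardinal.le_mk_of_le_mk_finset {α : Type u} {κ : Cardinal.{u}} (hκ : ℵ₀ ≤ κ)
    (h : κ ≤ #(Finset α)) : κ ≤ #α := by
  rcases finite_or_infinite α with hα | hα
  · exact absurd (hκ.trans h) (not_le.2 (mk_lt_aleph0 (α := Finset α)))
  · rwa [mk_finset_of_infinite] at h

theorem Cardinal.mk_le_mk_finset_of_injective {ι α : Type u} {X : Set α} {f : ι → Set α}
    (hf : Function.Injective f) (hfin : ∀ i, (f i).Finite) (hX : ∀ i, f i ⊆ X) :
    #ι ≤ #(Finset X) := by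
  refine mk_le_of_injective
    (f := fun i => ((hfin i).preimage Subtype.val_injective.injOn).toFinset) fun i j hij => hf ?_
  have := congrArg (fun s : Finset X => Subtype.val '' (s : Set X)) hij
  simpa [Subtype.image_preimage_coe, Set.inter_eq_right.2 (hX i),
    Set.inter_eq_right.2 (hX j)] using this

theorem Cardinal.eq_two_pow_of_mul_eq {κ β : Cardinal} (hβ : ℵ₀ ≤ β) (h : κ * β = 2 ^ β) :
    κ = 2 ^ β := by
  have hβκ : β < κ := by
    by_contra! hκβ
    have : κ * β ≤ β := (mul_le_mul_left hκβ β).trans (mul_eq_self hβ).le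
    exact (cantor β).not_ge (h ▸ this)
  rwa [mul_eq_left (hβ.trans hβκ.le) hβκ.le (aleph0_pos.trans_le hβ).ne'] at h

end Cardinality

namespace SimpleGraph

variable {G H T : SimpleGraph V}

theorem reachable_le_of_adj_le (h : G.Adj ≤ H.Reachable) : G.Reachable ≤ H.Reachable := by
  rw [reachable_eq_reflTransGen, reachable_eq_reflTransGen]
  exact Relation.reflTransGen_closed (reachable_eq_reflTransGen (G := H) ▸ h)

theorem edgeSet_fromEdgeSet_of_subset {s : Set (Sym2 V)} (h : s ⊆ G.edgeSet) :
    (fromEdgeSet s).edgeSet = s := by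
  rw [edgeSet_fromEdgeSet, sdiff_eq_left, Set.disjoint_left]
  exact fun e he => G.not_isDiag_of_mem_edgeSet (h he)

theorem IsAcyclic.exists_adj_forall_adj_eq (hH : H.IsAcyclic) (hfin : H.edgeSet.Finite)
    (hne : H.edgeSet.Nonempty) : ∃ u v, H.Adj u v ∧ ∀ w, H.Adj u w → w = v := by
  have := hfin.to_subtype
  obtain ⟨e, he⟩ := hne
  cases e with | h a b
  have hab : H.Adj a b := he
  have : Nonempty V := ⟨a⟩
  obtain ⟨u, v, p, hp, hmax⟩ := Walk.exists_isPath_forall_isPath_length_le_length H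
  have hnil : ¬p.Nil := fun h => by
    have := hmax a b (Walk.cons hab Walk.nil) (Walk.IsPath.nil.cons (by simpa using hab.ne))
    rw [Walk.length_eq_zero_iff.2 h, Walk.length_cons] at this
    omega
  refine ⟨u, p.snd, p.adj_snd hnil, fun w hw => hH.eq_snd_of_adj_start hp hw ?_⟩
  by_contra hwp
  simpa using hmax w v (p.cons hw.symm) (hp.cons hwp)

theorem Walk.IsCycle.even_card_filter_mem [DecidableEq V] {u : V} {c : G.Walk u u}
    (hc : c.IsCycle) (x : V) : Even (c.edges.toFinset.filter (x ∈ ·)).card := by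
  have := List.toFinset_filter c.edges (fun e => decide (x ∈ e))
  simp only [decide_eq_true_eq] at this
  rw [← this, List.toFinset_card_of_nodup (hc.edges_nodup.filter _),
    ← List.countP_eq_length_filter]
  simpa using (hc.isTrail.even_countP_edges_iff x).2 (absurd rfl)

theorem Walk.IsCycle.edges_toFinset_eq_of_symmDiff_subset [DecidableEq V] {u v : V}
    {c₁ : G.Walk u u} {c₂ : G.Walk v v} (hc₁ : c₁.IsCycle) (hc₂ : c₂.IsCycle) (hT : T.IsAcyclic)
    (h : ↑(c₁.edges.toFinset ∆ c₂.edges.toFinset) ⊆ T.edgeSet) :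
    c₁.edges.toFinset = c₂.edges.toFinset := by
  set d := c₁.edges.toFinset ∆ c₂.edges.toFinset
  by_contra hne
  have hd : d.Nonempty := Finset.nonempty_iff_ne_empty.2 fun h' => hne (symmDiff_eq_bot.1 h')
  have hdT : fromEdgeSet (d : Set (Sym2 V)) ≤ T :=
    (fromEdgeSet_le T).2 (Set.sdiff_subset.trans h)
  have hdE : (fromEdgeSet (d : Set (Sym2 V))).edgeSet = d := edgeSet_fromEdgeSet_of_subset h
  obtain ⟨x, y, hxy, hleaf⟩ := (hT.anti hdT).exists_adj_forall_adj_eq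
    (by rw [hdE]; exact d.finite_toSet) (by rw [hdE]; exact hd)
  -- `x` is a leaf of the graph `d`, but every vertex has even degree in the symmetric difference
  -- of two cycles.
  have hleaf_edges : d.filter (x ∈ ·) = {s(x, y)} := by
    ext e
    refine ⟨fun he => ?_, fun he => ?_⟩
    · rw [Finset.mem_filter] at he
      have hxe := Sym2.other_spec he.2
      have hadj : (fromEdgeSet (d : Set (Sym2 V))).Adj x (Sym2.Mem.other he.2) := by
        rw [← SimpleGraph.mem_edgeSet, hxe, hdE]
        exact he.1
      rw [Finset.mem_singleton, ← hxe, hleaf _ hadj]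
    · rw [Finset.mem_singleton.1 he, Finset.mem_filter]
      exact ⟨by rw [← Finset.mem_coe, ← hdE]; exact hxy, Sym2.mem_mk_left x y⟩
  have hsplit : d.filter (x ∈ ·) =
      c₁.edges.toFinset.filter (x ∈ ·) ∆ c₂.edges.toFinset.filter (x ∈ ·) := by
    ext e
    simp only [d, Finset.mem_filter, Finset.mem_symmDiff]
    tauto
  have hcount := Finset.card_symmDiff_add_two_mul_card_inter
    (c₁.edges.toFinset.filter (x ∈ ·)) (c₂.edges.toFinset.filter (x ∈ ·))
  rw [← hsplit, hleaf_edges, Finset.card_singleton] at hcount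
  obtain ⟨k, hk⟩ := (hc₁.even_card_filter_mem x).add (hc₂.even_card_filter_mem x)
  omega

theorem mk_edgeSet_le_of_adj_le_reachable (hHT : H.Adj ≤ T.Reachable)
    (hH : H.edgeSet.Infinite) : #H.edgeSet ≤ #T.edgeSet := by
  classical
  set S := ⋃ e ∈ T.edgeSet, (e.toFinset : Set V)
  have hS ⦃a b : V⦄ (hab : H.Adj a b) : a ∈ S := by
    obtain ⟨p⟩ := hHT a b hab
    have hsnd : s(a, p.snd) ∈ T.edgeSet := p.adj_snd (Walk.not_nil_of_ne hab.ne)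
    exact Set.mem_biUnion hsnd (by simp)
  have hHS : H.edgeSet ⊆ Set.range fun p : S × S => s(p.1.1, p.2.1) := by
    intro e he
    cases e with | h a b
    exact ⟨(⟨a, hS he⟩, ⟨b, hS (H.adj_symm he)⟩), rfl⟩
  have hκ : ℵ₀ ≤ #T.edgeSet := by
    refine infinite_iff.1 (Set.infinite_coe_iff.2 fun hT => hH ?_)
    have hSfin : S.Finite := hT.biUnion fun e _ => e.toFinset.finite_toSet
    have := hSfin.to_subtype
    exact (Set.finite_range _).subset hHS
  have hSκ : #S ≤ #T.edgeSet := by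
    refine (mk_biUnion_le _ _).trans ?_
    calc #T.edgeSet * ⨆ e : T.edgeSet, #(e.1.toFinset : Set V)
        ≤ #T.edgeSet * ℵ₀ := by
          gcongr
          exact ciSup_le' fun e => (e.1.toFinset.finite_toSet.lt_aleph0).le
      _ = #T.edgeSet := mul_aleph0_eq hκ
  calc #H.edgeSet ≤ #(S × S) := (mk_le_mk_of_subset hHS).trans mk_range_le
    _ = #S * #S := by rw [mk_prod, lift_id]
    _ ≤ #T.edgeSet * #T.edgeSet := by gcongr
    _ = #T.edgeSet := mul_eq_self hκ

theorem sum_mk_supp (G : SimpleGraph V) :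
    Cardinal.sum (fun c : G.ConnectedComponent => #c.supp) = #V := by
  rw [← mk_sigma]
  exact mk_congr ((Equiv.sigmaCongrRight fun c => Equiv.subtypeEquivRight fun v =>
    c.mem_supp_iff v).trans (Equiv.sigmaFiberEquiv G.connectedComponentMk))

end SimpleGraph

variable {G F H T : SimpleGraph V}

theorem isMaximalForest_iff_maximal :
    IsMaximalForest G F ↔ Maximal (fun H => H ≤ G ∧ H.IsAcyclic) F := by
  refine ⟨fun ⟨hle, hac, hmax⟩ => ⟨⟨hle, hac⟩, fun H ⟨hHG, hH⟩ hFH => (hmax H hHG hH hFH).le⟩,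
    fun h => ⟨h.prop.1, h.prop.2, fun H hHG hH hFH => (h.le_of_ge ⟨hHG, hH⟩ hFH).antisymm hFH⟩⟩

theorem isMaximalForest_iff :
    IsMaximalForest G F ↔ F ≤ G ∧ F.IsAcyclic ∧ F.Reachable = G.Reachable := by
  refine ⟨fun h => ⟨h.1, h.2.1, ?_⟩, fun ⟨hle, hac, hr⟩ => ?_⟩
  · exact (maximal_isAcyclic_iff_reachable_eq h.1 h.2.1).1 (isMaximalForest_iff_maximal.1 h)
  · exact isMaximalForest_iff_maximal.2 ((maximal_isAcyclic_iff_reachable_eq hle hac).2 hr)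

theorem IsMaximalForest.reachable_eq (hF : IsMaximalForest G F) : F.Reachable = G.Reachable :=
  (isMaximalForest_iff.1 hF).2.2

theorem exists_isMaximalForest_between {A : SimpleGraph V} (hA : A.IsAcyclic) (hAH : A ≤ H)
    (hHG : H ≤ G) (hGH : G.Reachable ≤ H.Reachable) :
    ∃ F, IsMaximalForest G F ∧ A ≤ F ∧ F ≤ H := by
  obtain ⟨F, hAF, hFH, hF, hr⟩ := exists_isAcyclic_reachable_eq_le_of_le_of_isAcyclic hAH hA
  have hHr : H.Reachable = G.Reachable := (Reachable.mono' hHG).antisymm hGH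
  exact ⟨F, isMaximalForest_iff.2 ⟨hFH.trans hHG, hF, hr.trans hHr⟩, hAF, hFH⟩

theorem exists_isMaximalForest (G : SimpleGraph V) : ∃ F, IsMaximalForest G F :=
  let ⟨F, hFG, hF, hr⟩ := G.exists_isAcyclic_reachable_eq_le
  ⟨F, isMaximalForest_iff.2 ⟨hFG, hF, hr⟩⟩

def cycleEdges (G : SimpleGraph V) : Set (Sym2 V) := ⋃₀ cycleSet G

theorem cycleEdges_subset_edgeSet : cycleEdges G ⊆ G.edgeSet := by
  rintro e ⟨_, ⟨_, c, -, rfl⟩, he⟩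
  exact c.edges_subset_edgeSet he

theorem finite_of_mem_cycleSet {s : Set (Sym2 V)} (hs : s ∈ cycleSet G) : s.Finite := by
  obtain ⟨_, c, -, rfl⟩ := hs
  exact c.edges.finite_toSet

theorem IsMaximalForest.edgeSet_diff_subset_cycleEdges (hF : IsMaximalForest G F) :
    G.edgeSet \ F.edgeSet ⊆ cycleEdges G := by
  rintro e ⟨hab, habF⟩
  cases e with | h a b
  have hFG : F ≤ G.deleteEdges {s(a, b)} := by
    intro x y hxy
    rw [deleteEdges_adj, Set.mem_singleton_iff]
    exact ⟨hF.1 hxy, fun h => habF (h ▸ hxy)⟩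
  obtain ⟨u, c, hc, he⟩ := adj_and_reachable_delete_edges_iff_exists_cycle.1
    ⟨hab, ((hF.reachable_eq ▸ (hab : G.Adj a b).reachable : F.Reachable a b)).mono hFG⟩
  exact ⟨_, ⟨u, c, hc, rfl⟩, he⟩

theorem eq_of_mem_cycleSet_of_diff_eq {s₁ s₂ : Set (Sym2 V)} (hs₁ : s₁ ∈ cycleSet G)
    (hs₂ : s₂ ∈ cycleSet G) (hT : T.IsAcyclic) (h : s₁ \ T.edgeSet = s₂ \ T.edgeSet) :
    s₁ = s₂ := by
  classical
  obtain ⟨u, c₁, hc₁, rfl⟩ := hs₁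
  obtain ⟨v, c₂, hc₂, rfl⟩ := hs₂
  simp only [← List.coe_toFinset] at h ⊢
  rw [hc₁.edges_toFinset_eq_of_symmDiff_subset hc₂ hT]
  intro e he
  by_contra heT
  rw [Finset.mem_coe, Finset.mem_symmDiff] at he
  rcases he with ⟨he₁, he₂⟩ | ⟨he₂, he₁⟩
  · exact he₂ (Set.mem_of_mem_sdiff (h ▸ ⟨he₁, heT⟩ : e ∈ ↑c₂.edges.toFinset \ T.edgeSet))
  · exact he₁ (Set.mem_of_mem_sdiff (h ▸ ⟨he₂, heT⟩ : e ∈ ↑c₁.edges.toFinset \ T.edgeSet))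

theorem mk_cycleEdges_le : #(cycleEdges G) ≤ #(cycleSet G) * ℵ₀ := by
  refine (mk_sUnion_le _).trans ?_
  gcongr
  exact ciSup_le' fun s => (finite_of_mem_cycleSet s.2).lt_aleph0.le

theorem mk_cycleEdges_diff_eq (hT : T.IsAcyclic) (hG : ℵ₀ ≤ #(cycleSet G)) :
    #↥(cycleEdges G \ T.edgeSet) = #(cycleSet G) := by
  refine le_antisymm ?_ (le_mk_of_le_mk_finset hG (mk_le_mk_finset_of_injective
    (f := fun s : cycleSet G => s.1 \ T.edgeSet) ?_ ?_ ?_))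
  · calc #↥(cycleEdges G \ T.edgeSet) ≤ #(cycleEdges G) := mk_le_mk_of_subset Set.sdiff_subset
      _ ≤ #(cycleSet G) * ℵ₀ := mk_cycleEdges_le
      _ = #(cycleSet G) := mul_aleph0_eq hG
  · exact fun s t h => Subtype.ext (eq_of_mem_cycleSet_of_diff_eq s.2 t.2 hT h)
  · exact fun s => (finite_of_mem_cycleSet s.2).sdiff
  · exact fun s => Set.sdiff_subset_sdiff_left (Set.subset_sUnion_of_mem s.2)

theorem mk_cycleEdges_eq (hG : ℵ₀ ≤ #(cycleSet G)) : #(cycleEdges G) = #(cycleSet G) := by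
  simpa using mk_cycleEdges_diff_eq (T := ⊥) isAcyclic_bot hG

theorem IsMaximalForest.exists_exchange (hF : IsMaximalForest G F) {x y : V} (hxy : G.Adj x y) :
    ∃ z, F.Adj x z ∧ IsMaximalForest G (F.deleteEdges {s(x, z)} ⊔ edge x y) := by
  obtain ⟨p, hp⟩ := (hF.reachable_eq ▸ hxy.reachable : F.Reachable x y).exists_isPath
  cases p with
  | nil => exact absurd rfl hxy.ne
  | @cons _ z _ hxz q =>
  -- `q` leads from `z` back to `y` avoiding `x`, while `s(x, z)` is a bridge of the forest `F`.
  have hzy : (F.deleteEdges {s(x, z)}).Reachable z y := reachable_deleteEdges_iff_exists_walk.2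
    ⟨q, fun h => ((Walk.cons_isPath_iff _ _).1 hp).2 (q.fst_mem_support_of_mem_edges h)⟩
  have hxz' : ¬(F.deleteEdges {s(x, z)}).Reachable x z :=
    isAcyclic_iff_forall_adj_isBridge.1 hF.2.1 hxz
  have hF'G : F.deleteEdges {s(x, z)} ⊔ edge x y ≤ G :=
    sup_le ((F.deleteEdges_le _).trans hF.1) ((edge_le_iff _).2 (Or.inr hxy))
  refine ⟨z, hxz, isMaximalForest_iff.2 ⟨hF'G, ?_, ?_⟩⟩
  · exact (hF.2.1.anti (F.deleteEdges_le _)).sup_edge_of_not_reachable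
      fun h => hxz' (h.trans hzy.symm)
  · refine le_antisymm (Reachable.mono' hF'G) ?_
    rw [← hF.reachable_eq]
    refine reachable_le_of_adj_le fun a b hab => ?_
    by_cases he : s(a, b) = s(x, z)
    · have hxy' : (F.deleteEdges {s(x, z)} ⊔ edge x y).Adj x y :=
        Or.inr ((edge_adj x y x y).2 ⟨Or.inl ⟨rfl, rfl⟩, hxy.ne⟩)
      have hxz'' : (F.deleteEdges {s(x, z)} ⊔ edge x y).Reachable x z :=
        hxy'.reachable.trans (hzy.symm.mono le_sup_left)
      rcases Sym2.eq_iff.1 he with ⟨rfl, rfl⟩ | ⟨rfl, rfl⟩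
      exacts [hxz'', hxz''.symm]
    · exact Adj.reachable (Or.inl (deleteEdges_adj.2 ⟨hab, he⟩))

theorem forestGraph_adj_iff {F₁ F₂ : {F : SimpleGraph V // IsMaximalForest G F}} :
    (forestGraph G).Adj F₁ F₂ ↔ (F₁.1.edgeSet \ F₂.1.edgeSet).encard = 1 ∧
      (F₂.1.edgeSet \ F₁.1.edgeSet).encard = 1 :=
  Iff.rfl

theorem IsMaximalForest.exists_forestGraph_adj (hF : IsMaximalForest G F) {f : Sym2 V}
    (hf : f ∈ G.edgeSet \ F.edgeSet) :
    ∃ F' : {F : SimpleGraph V // IsMaximalForest G F},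
      (forestGraph G).Adj F' ⟨F, hF⟩ ∧ F'.1.edgeSet \ F.edgeSet = {f} := by
  cases f with | h x y
  obtain ⟨z, hxz, hF'⟩ := hF.exists_exchange hf.1
  have hne : s(x, z) ≠ s(x, y) := fun h => hf.2 (h ▸ hxz)
  have hE : (F.deleteEdges {s(x, z)} ⊔ edge x y).edgeSet =
      insert s(x, y) (F.edgeSet \ {s(x, z)}) := by
    rw [edgeSet_sup, edgeSet_deleteEdges, edgeSet_edge_of_ne (G.ne_of_adj hf.1), Set.union_comm,
      Set.singleton_union]
  have hnew : (F.deleteEdges {s(x, z)} ⊔ edge x y).edgeSet \ F.edgeSet = {s(x, y)} := by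
    ext e
    simp only [hE, Set.mem_sdiff, Set.mem_insert_iff, Set.mem_singleton_iff]
    refine ⟨fun ⟨h, heF⟩ => h.resolve_right fun h' => heF h'.1, ?_⟩
    rintro rfl
    exact ⟨Or.inl rfl, hf.2⟩
  have hold : F.edgeSet \ (F.deleteEdges {s(x, z)} ⊔ edge x y).edgeSet = {s(x, z)} := by
    ext e
    simp only [hE, Set.mem_sdiff, Set.mem_insert_iff, Set.mem_singleton_iff, not_or, not_and,
      not_not]
    refine ⟨fun ⟨heF, _, h⟩ => h heF, ?_⟩
    rintro rfl
    exact ⟨hxz, hne, fun _ => rfl⟩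
  exact ⟨⟨_, hF'⟩, forestGraph_adj_iff.2
    ⟨by rw [hnew, Set.encard_singleton], by rw [hold, Set.encard_singleton]⟩, hnew⟩

theorem finite_symmDiff_edgeSet_of_forestGraph_reachable
    {F₁ F₂ : {F : SimpleGraph V // IsMaximalForest G F}} (h : (forestGraph G).Reachable F₁ F₂) :
    (F₁.1.edgeSet ∆ F₂.1.edgeSet).Finite := by
  obtain ⟨p⟩ := h
  induction p with
  | nil => simp
  | cons hadj _ ih =>
    obtain ⟨h₁, h₂⟩ := forestGraph_adj_iff.1 hadj
    have hadj_fin := (Set.finite_of_encard_eq_coe h₁).union (Set.finite_of_encard_eq_coe h₂)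
    exact (hadj_fin.union ih).subset (symmDiff_triangle _ _ _)

theorem IsMaximalForest.symmDiff_edgeSet_subset_cycleEdges (hF : IsMaximalForest G F)
    (hT : IsMaximalForest G T) : F.edgeSet ∆ T.edgeSet ⊆ cycleEdges G :=
  Set.union_subset
    ((Set.sdiff_subset_sdiff_left (edgeSet_mono hF.1)).trans hT.edgeSet_diff_subset_cycleEdges)
    ((Set.sdiff_subset_sdiff_left (edgeSet_mono hT.1)).trans hF.edgeSet_diff_subset_cycleEdges)

theorem mk_supp_forestGraph_le (hG : ℵ₀ ≤ #(cycleSet G))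
    (c : (forestGraph G).ConnectedComponent) : #c.supp ≤ #(cycleSet G) := by
  obtain ⟨F₀, rfl⟩ := c.exists_rep
  have : Infinite (cycleEdges G) := infinite_iff.2 (mk_cycleEdges_eq hG ▸ hG)
  have hreach (F : (forestGraph G).connectedComponentMk F₀ |>.supp) :
      (forestGraph G).Reachable F F₀ := ConnectedComponent.exact F.2
  calc #((forestGraph G).connectedComponentMk F₀).supp
      ≤ #(Finset (cycleEdges G)) := mk_le_mk_finset_of_injective
        (f := fun F => F.1.1.edgeSet ∆ F₀.1.edgeSet)
        (fun F F' h =>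
          Subtype.ext (Subtype.ext (edgeSet_injective (symmDiff_left_injective _ h))))
        (fun F => finite_symmDiff_edgeSet_of_forestGraph_reachable (hreach F))
        (fun F => F.1.2.symmDiff_edgeSet_subset_cycleEdges F₀.2)
    _ = #(cycleSet G) := by rw [mk_finset_of_infinite, mk_cycleEdges_eq hG]

theorem le_mk_supp_forestGraph (hG : ℵ₀ ≤ #(cycleSet G))
    (c : (forestGraph G).ConnectedComponent) : #(cycleSet G) ≤ #c.supp := by
  obtain ⟨F₀, rfl⟩ := c.exists_rep
  choose F hF using fun f : ↥(cycleEdges G \ F₀.1.edgeSet) =>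
    F₀.2.exists_forestGraph_adj ⟨cycleEdges_subset_edgeSet f.2.1, f.2.2⟩
  have hinj : Function.Injective fun f => (⟨F f, ConnectedComponent.sound (hF f).1.reachable⟩ :
      ((forestGraph G).connectedComponentMk F₀).supp) := by
    intro f f' h
    have := congrArg (fun F => F.1.1.edgeSet \ F₀.1.edgeSet) h
    simp only [(hF f).2, (hF f').2, Set.singleton_eq_singleton_iff] at this
    exact Subtype.ext this
  calc #(cycleSet G) = #↥(cycleEdges G \ F₀.1.edgeSet) :=
        (mk_cycleEdges_diff_eq F₀.2.2.1 hG).symm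
    _ ≤ _ := mk_le_of_injective hinj

theorem IsMaximalForest.eq_of_inter_cycleEdges_eq (hF : IsMaximalForest G F)
    (hT : IsMaximalForest G T) (h : F.edgeSet ∩ cycleEdges G = T.edgeSet ∩ cycleEdges G) :
    F = T := by
  refine edgeSet_injective (Set.ext fun e => ?_)
  by_cases he : e ∈ cycleEdges G
  · simpa [he] using Set.ext_iff.1 h e
  · have hbridge (F' : SimpleGraph V) (hF' : IsMaximalForest G F') (heG : e ∈ G.edgeSet) :
        e ∈ F'.edgeSet :=
      by_contra fun heF' => he (hF'.edgeSet_diff_subset_cycleEdges ⟨heG, heF'⟩)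
    exact ⟨fun heF => hbridge T hT (edgeSet_mono hF.1 heF),
      fun heT => hbridge F hF (edgeSet_mono hT.1 heT)⟩

theorem mk_maximalForests_le :
    #{F : SimpleGraph V // IsMaximalForest G F} ≤ 2 ^ #(cycleEdges G) := by
  rw [← mk_set]
  refine mk_le_of_injective (f := fun F => (Subtype.val ⁻¹' F.1.edgeSet : Set (cycleEdges G)))
    fun F T h => Subtype.ext (F.2.eq_of_inter_cycleEdges_eq T.2 ?_)
  simpa [Subtype.image_preimage_coe, Set.inter_comm] using congrArg (Subtype.val '' ·) h

theorem IsMaximalForest.two_pow_le_mk_maximalForests {S : SimpleGraph V}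
    (hT : IsMaximalForest G T) (hS : S.IsAcyclic) (hSG : S ≤ G)
    (hST : Disjoint S.edgeSet T.edgeSet) :
    2 ^ #S.edgeSet ≤ #{F : SimpleGraph V // IsMaximalForest G F} := by
  have hex (A : Set S.edgeSet) : ∃ F : SimpleGraph V,
      IsMaximalForest G F ∧ F.edgeSet ∩ S.edgeSet = Subtype.val '' A := by
    have hAS : Subtype.val '' A ⊆ S.edgeSet := Subtype.coe_image_subset _ _
    have hAE := edgeSet_fromEdgeSet_of_subset hAS
    have hAle : fromEdgeSet (Subtype.val '' A) ≤ S :=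
      (fromEdgeSet_le S).2 (Set.sdiff_subset.trans hAS)
    obtain ⟨F, hF, hAF, hFT⟩ := exists_isMaximalForest_between (hS.anti hAle) le_sup_right
      (sup_le hT.1 (hAle.trans hSG)) (hT.reachable_eq ▸ Reachable.mono' le_sup_left)
    refine ⟨F, hF, Set.Subset.antisymm (fun e ⟨heF, heS⟩ => ?_) fun e he => ⟨?_, hAS he⟩⟩
    · rcases (edgeSet_sup _ _ ▸ edgeSet_mono hFT heF : e ∈ T.edgeSet ∪ _) with heT | heA
      · exact absurd heT (Set.disjoint_left.1 hST heS)
      · rwa [← hAE]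
    · exact edgeSet_mono hAF (by rwa [hAE])
  choose F hF hFS using hex
  rw [← mk_set]
  refine mk_le_of_injective (f := fun A => (⟨F A, hF A⟩ : {F // IsMaximalForest G F}))
    fun A B h => Set.image_injective.2 Subtype.val_injective ?_
  rw [← hFS A, ← hFS B, show F A = F B from congrArg Subtype.val h]

theorem two_pow_mk_cycleSet_le_mk_maximalForests (hG : ℵ₀ ≤ #(cycleSet G)) :
    2 ^ #(cycleSet G) ≤ #{F : SimpleGraph V // IsMaximalForest G F} := by
  obtain ⟨T, hT⟩ := exists_isMaximalForest G
  have hBG : cycleEdges G \ T.edgeSet ⊆ G.edgeSet :=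
    Set.sdiff_subset.trans cycleEdges_subset_edgeSet
  have hBE := edgeSet_fromEdgeSet_of_subset hBG
  have hB := mk_cycleEdges_diff_eq hT.2.1 hG
  -- a spanning forest `S` of the non-tree cycle edges of `T` is disjoint from `T` and just as large
  obtain ⟨S, hSB, hS, hSr⟩ :=
    (fromEdgeSet (cycleEdges G \ T.edgeSet)).exists_isAcyclic_reachable_eq_le
  have hSE : S.edgeSet ⊆ cycleEdges G \ T.edgeSet := hBE ▸ edgeSet_mono hSB
  have hSG : S ≤ G := hSB.trans ((fromEdgeSet_le G).2 (Set.sdiff_subset.trans hBG))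
  have hBS : #(cycleSet G) ≤ #S.edgeSet := by
    rw [← hB, ← hBE]
    refine mk_edgeSet_le_of_adj_le_reachable (hSr ▸ fun a b h => h.reachable) ?_
    rw [hBE, ← Set.infinite_coe_iff, infinite_iff, hB]
    exact hG
  exact (power_le_power_left two_ne_zero hBS).trans
    (hT.two_pow_le_mk_maximalForests hS hSG (Set.disjoint_sdiff_left.mono_left hSE))

theorem mk_maximalForests_eq (hG : ℵ₀ ≤ #(cycleSet G)) :
    #{F : SimpleGraph V // IsMaximalForest G F} = 2 ^ #(cycleSet G) :=
  (mk_cycleEdges_eq hG ▸ mk_maximalForests_le).antisymm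
    (two_pow_mk_cycleSet_le_mk_maximalForests hG)

universe u

/-- If `G` has `β` cycles, `β` infinite, then every connected component of the forest
graph has exactly `β` vertices and the forest graph has exactly `2 ^ β` components. -/
theorem forestGraph_components {W : Type u} (G : SimpleGraph W) (β : Cardinal.{u}) (hβ : ℵ₀ ≤ β)
    (hc : #(cycleSet G) = β) :
    (∀ c : (forestGraph G).ConnectedComponent, #(c.supp) = β) ∧
      #((forestGraph G).ConnectedComponent) = 2 ^ β := by
  subst hc
  have hsupp (c : (forestGraph G).ConnectedComponent) : #c.supp = #(cycleSet G) :=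
    (mk_supp_forestGraph_le hβ c).antisymm (le_mk_supp_forestGraph hβ c)
  refine ⟨hsupp, eq_two_pow_of_mul_eq hβ ?_⟩
  rw [← sum_const', ← mk_maximalForests_eq hβ, ← (forestGraph G).sum_mk_supp]
  simp only [hsupp]
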